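/- arXiv:2605.19170 — 3 statements merged into one kernel-verified Lean document; each statement's English description precedes it below -/
import Mathlib

section
/- For F = [[0,1],[-1,-2]], the limit as t → 0⁺ of det(I - exp(Ft))² / det(I - exp(Ft)·exp(Ft)ᵀ) equals 3/4. -/
open NormedSpace Matrix Filter Topology

/-! `F = -1 + N` with `N = !![1, 1; -1, -1]` and `N² = 0`, so `exp (t F) = e⁻ᵗ (1 + t N)` and both
determinants are explicit: the numerator is `(1 - e⁻ᵗ)⁴ ~ t⁴`, and since `1 - e⁻²ᵗ = 2 e⁻ᵗ sinh t`
the denominator is `4 e⁻²ᵗ (sinh² t - t²) ~ 4 t⁴ / 3`, the cubic term of `sinh t - t` being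
extracted by L'Hôpital's rule. -/

theorem NormedSpace.exp_eq_sum_range_of_pow_eq_zero (𝕂 : Type*) {𝔸 : Type*} [Field 𝕂]
    [CharZero 𝕂] [Ring 𝔸] [Algebra 𝕂 𝔸] [TopologicalSpace 𝔸] [IsTopologicalRing 𝔸] {x : 𝔸}
    {n : ℕ} (hx : x ^ n = 0) : exp x = ∑ i ∈ Finset.range n, (i.factorial⁻¹ : 𝕂) • x ^ i := by
  rw [exp_eq_tsum 𝕂]
  refine tsum_eq_sum fun i hi => ?_
  rw [pow_eq_zero_of_le (by simpa using hi) hx, smul_zero]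

theorem NormedSpace.exp_eq_one_add_of_sq_eq_zero {𝔸 : Type*} [Ring 𝔸] [Algebra ℚ 𝔸]
    [TopologicalSpace 𝔸] [IsTopologicalRing 𝔸] {x : 𝔸} (hx : x ^ 2 = 0) : exp x = 1 + x := by
  simp [exp_eq_sum_range_of_pow_eq_zero ℚ hx, Finset.sum_range_succ]

theorem Matrix.exp_smul_one {n 𝔸 : Type*} [Fintype n] [DecidableEq n] [NormedRing 𝔸]
    [NormedAlgebra ℚ 𝔸] [CompleteSpace 𝔸] (c : 𝔸) :
    exp (c • (1 : Matrix n n 𝔸)) = exp c • 1 := by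
  rw [smul_one_eq_diagonal, exp_diagonal, Pi.exp_def, smul_one_eq_diagonal]

theorem HasDerivAt.tendsto_div_self_nhdsNE {f : ℝ → ℝ} {f' : ℝ} (hf : HasDerivAt f f' 0)
    (h0 : f 0 = 0) : Tendsto (fun t => f t / t) (𝓝[≠] 0) (𝓝 f') := by
  simpa [h0, div_eq_inv_mul] using hf.tendsto_slope_zero

theorem Continuous.tendsto_nhdsWithin_of_apply_eq {X Y : Type*} [TopologicalSpace X]
    [TopologicalSpace Y] {f : X → Y} (hf : Continuous f) {s : Set X} {a : X} {b : Y}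
    (ha : f a = b) : Tendsto f (𝓝[s] a) (𝓝 b) :=
  (hf.tendsto' a b ha).mono_left nhdsWithin_le_nhds

namespace Real

theorem tendsto_sinh_div_self : Tendsto (fun t => sinh t / t) (𝓝[≠] 0) (𝓝 1) := by
  simpa using (hasDerivAt_sinh 0).tendsto_div_self_nhdsNE sinh_zero

theorem tendsto_cosh_sub_one_div_sq :
    Tendsto (fun t => (cosh t - 1) / t ^ 2) (𝓝[≠] 0) (𝓝 (1 / 2)) := by
  refine HasDerivAt.lhopital_zero_nhdsNE (f' := sinh) (g' := fun t => 2 * t)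
    (.of_forall fun t => (hasDerivAt_cosh t).sub_const 1)
    (.of_forall fun t => by simpa using hasDerivAt_pow 2 t)
    (eventually_mem_nhdsWithin.mono fun t ht => mul_ne_zero two_ne_zero ht)
    ((by fun_prop : Continuous _).tendsto_nhdsWithin_of_apply_eq (by simp))
    ((continuous_pow 2).tendsto_nhdsWithin_of_apply_eq (by simp)) ?_
  simpa [div_mul_eq_div_div_swap] using tendsto_sinh_div_self.div_const 2

theorem tendsto_sinh_sub_self_div_cube :
    Tendsto (fun t => (sinh t - t) / t ^ 3) (𝓝[≠] 0) (𝓝 (1 / 6)) := by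
  refine HasDerivAt.lhopital_zero_nhdsNE (f' := fun t => cosh t - 1) (g' := fun t => 3 * t ^ 2)
    (.of_forall fun t => (hasDerivAt_sinh t).sub (hasDerivAt_id t))
    (.of_forall fun t => by simpa using hasDerivAt_pow 3 t)
    (eventually_mem_nhdsWithin.mono fun t ht => mul_ne_zero three_ne_zero (pow_ne_zero 2 ht))
    ((by fun_prop : Continuous _).tendsto_nhdsWithin_of_apply_eq (by simp))
    ((continuous_pow 3).tendsto_nhdsWithin_of_apply_eq (by simp)) ?_
  convert tendsto_cosh_sub_one_div_sq.div_const 3 using 2 <;> ring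

theorem tendsto_sinh_sq_sub_sq_div_pow_four :
    Tendsto (fun t => (sinh t ^ 2 - t ^ 2) / t ^ 4) (𝓝[≠] 0) (𝓝 (1 / 3)) := by
  have hsum : Tendsto (fun t => (sinh t + t) / t) (𝓝[≠] 0) (𝓝 (1 + 1)) := by
    refine (tendsto_sinh_div_self.add_const 1).congr' ?_
    filter_upwards [self_mem_nhdsWithin] with t (ht : t ≠ 0)
    rw [add_div, div_self ht]
  convert tendsto_sinh_sub_self_div_cube.mul hsum using 1
  · ext t
    rw [div_mul_div_comm]
    ring
  · norm_num

theorem tendsto_one_sub_exp_neg_div_self :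
    Tendsto (fun t => (1 - exp (-t)) / t) (𝓝[≠] 0) (𝓝 1) := by
  simpa using ((hasDerivAt_neg 0).exp.const_sub 1).tendsto_div_self_nhdsNE (by simp)

theorem one_sub_exp_neg_sq (t : ℝ) : 1 - exp (-t) ^ 2 = 2 * exp (-t) * sinh t := by
  rw [sinh_eq, exp_neg]
  field_simp

end Real

local notation "F₂" => (!![0, 1; -1, -2] : Matrix (Fin 2) (Fin 2) ℝ)

theorem exp_smul_hold2 (t : ℝ) : exp (t • F₂) = Real.exp (-t) • !![1 + t, t; -t, 1 - t] := by
  have hsplit : t • F₂ = (-t) • 1 + t • !![1, 1; -1, -1] := by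
    ext i j; fin_cases i <;> fin_cases j <;> simp [mul_two]
  have hnil : (t • !![1, 1; -1, -1] : Matrix (Fin 2) (Fin 2) ℝ) ^ 2 = 0 := by
    ext i j; fin_cases i <;> fin_cases j <;> simp [sq, mul_apply]
  rw [hsplit, exp_add_of_commute _ _ ((Commute.one_left _).smul_left _), exp_smul_one,
    ← Real.exp_eq_exp_ℝ, exp_eq_one_add_of_sq_eq_zero hnil]
  ext i j; fin_cases i <;> fin_cases j <;> simp [sub_eq_add_neg]

theorem det_one_sub_exp_smul_hold2 (t : ℝ) : det (1 - exp (t • F₂)) = (1 - Real.exp (-t)) ^ 2 := by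
  rw [exp_smul_hold2]
  simp only [det_fin_two, Matrix.sub_apply, Matrix.smul_apply, one_apply_eq, one_apply_ne,
    of_apply, cons_val', cons_val_zero, cons_val_one, cons_val_fin_one, smul_eq_mul, ne_eq,
    zero_ne_one, one_ne_zero, not_false_eq_true]
  ring

theorem det_one_sub_exp_smul_mul_transpose_hold2 (t : ℝ) :
    det (1 - exp (t • F₂) * (exp (t • F₂))ᵀ) =
      4 * Real.exp (-t) ^ 2 * (Real.sinh t ^ 2 - t ^ 2) := by
  have hdet : det (1 - exp (t • F₂) * (exp (t • F₂))ᵀ) =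
      (1 - Real.exp (-t) ^ 2) ^ 2 - 4 * t ^ 2 * Real.exp (-t) ^ 2 := by
    rw [exp_smul_hold2]
    simp only [det_fin_two, Matrix.sub_apply, Matrix.mul_apply, Fin.sum_univ_two,
      transpose_apply, Matrix.smul_apply, one_apply_eq, one_apply_ne, of_apply, cons_val',
      cons_val_zero, cons_val_one, cons_val_fin_one, smul_eq_mul, ne_eq, zero_ne_one,
      one_ne_zero, not_false_eq_true]
    ring
  rw [hdet, Real.one_sub_exp_neg_sq]
  ring

/-- For `F = [[0,1],[-1,-2]]`, the ratio `det(I - exp(Ft))² / det(I - exp(Ft) exp(Ft)ᵀ)`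
tends to `3/4` as `t → 0⁺`. -/
theorem det_ratio_limit_hold2 :
    Tendsto
      (fun t : ℝ =>
        (Matrix.det ((1 : Matrix (Fin 2) (Fin 2) ℝ) -
            exp (t • (!![0, 1; -1, -2] : Matrix (Fin 2) (Fin 2) ℝ)))) ^ 2 /
          Matrix.det ((1 : Matrix (Fin 2) (Fin 2) ℝ) -
            exp (t • (!![0, 1; -1, -2] : Matrix (Fin 2) (Fin 2) ℝ)) *
              (exp (t • (!![0, 1; -1, -2] : Matrix (Fin 2) (Fin 2) ℝ)))ᵀ))
      (nhdsWithin 0 (Set.Ioi 0)) (nhds (3 / 4)) := by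
  have hexp : Tendsto (fun t => Real.exp (-t)) (𝓝[≠] 0) (𝓝 1) :=
    (by fun_prop : Continuous fun t => Real.exp (-t)).tendsto_nhdsWithin_of_apply_eq (by simp)
  have hlim : Tendsto (fun t => ((1 - Real.exp (-t)) / t) ^ 4 /
      (4 * Real.exp (-t) ^ 2 * ((Real.sinh t ^ 2 - t ^ 2) / t ^ 4))) (𝓝[≠] 0) (𝓝 (3 / 4)) := by
    rw [show (3 / 4 : ℝ) = 1 ^ 4 / (4 * 1 ^ 2 * (1 / 3)) by norm_num]
    exact (Real.tendsto_one_sub_exp_neg_div_self.pow 4).div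
      (((hexp.pow 2).const_mul 4).mul Real.tendsto_sinh_sq_sub_sq_div_pow_four) (by norm_num)
  refine (hlim.mono_left (nhdsGT_le_nhdsNE 0)).congr' ?_
  filter_upwards [self_mem_nhdsWithin] with t (ht : 0 < t)
  rw [det_one_sub_exp_smul_hold2, det_one_sub_exp_smul_mul_transpose_hold2, div_pow,
    mul_div_assoc', div_div_div_cancel_right₀ (pow_ne_zero 4 ht.ne'), ← pow_mul]
end

section
/- Let p_t(x) = (1/N)·Σ_k φ_{σ²}(x - α_t·x_k) be the empirical OU diffusion density on ℝᵈ with α_t = e^{-ξt}, σ_t² = L⁻¹(1 - e^{-2ξt}), and distinct points x_k. Fix x = α_t·x_j for some j with x_j having a unique nearest neighbor structure (‖x_j - x_k‖ > 0 for k ≠ j). Then as t → 0⁺, the posterior weight w_j(α_t x_j) = φ_{σ_t²}(0)/Σ_k φ_{σ_t²}(α_t(x_j - x_k)) tends to 1. -/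
set_option maxHeartbeats 1000000

open Filter

/-- Isotropic Gaussian density `N(0, σ² I)` on `ℝᵈ` evaluated at `y`. -/
noncomputable def isoGaussPdf (d : ℕ) (σsq : ℝ) (y : EuclideanSpace ℝ (Fin d)) : ℝ :=
  (2 * Real.pi * σsq) ^ (-(d : ℝ) / 2) * Real.exp (-‖y‖ ^ 2 / (2 * σsq))

/-- Collapse of the empirical OU diffusion posterior: with `α_t = e^{-ξt}`,
`σ_t² = L⁻¹(1 - e^{-2ξt})`, and training points `x_k` (`x_k ≠ x_j` for `k ≠ j`), the posterior
weight of the `j`th point at `x = α_t x_j`,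
`w_j = φ_{σ_t²}(0) / Σ_k φ_{σ_t²}(α_t (x_j - x_k))`, tends to `1` as `t → 0⁺`. -/
theorem ou_posterior_weight_collapse (d N : ℕ) (ξ Linv : ℝ) (hξ : 0 < ξ) (hL : 0 < Linv)
    (x : Fin N → EuclideanSpace ℝ (Fin d)) (j : Fin N)
    (hsep : ∀ k, k ≠ j → x k ≠ x j) :
    Tendsto
      (fun t : ℝ =>
        isoGaussPdf d (Linv * (1 - Real.exp (-2 * ξ * t))) 0 /
          ∑ k, isoGaussPdf d (Linv * (1 - Real.exp (-2 * ξ * t)))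
            (Real.exp (-ξ * t) • (x j - x k)))
      (nhdsWithin 0 (Set.Ioi 0)) (nhds 1) := by
  set σsq : ℝ → ℝ := fun t => Linv * (1 - Real.exp (-2 * ξ * t)) with hσ
  have hσpos : ∀ t ∈ Set.Ioi (0:ℝ), 0 < σsq t := by
    intro t ht
    have h1 : Real.exp (-2 * ξ * t) < 1 := by
      rw [Real.exp_lt_one_iff]
      nlinarith [Set.mem_Ioi.mp ht]
    exact mul_pos hL (by linarith)
  set g : ℝ → ℝ := fun t =>
    ∑ k, Real.exp (-‖Real.exp (-ξ * t) • (x j - x k)‖ ^ 2 / (2 * σsq t)) with hg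
  have heq : ∀ t ∈ Set.Ioi (0:ℝ),
      (isoGaussPdf d (σsq t) 0 /
        ∑ k, isoGaussPdf d (σsq t) (Real.exp (-ξ * t) • (x j - x k))) = 1 / g t := by
    intro t ht
    have hσt := hσpos t ht
    have hC : (0:ℝ) < (2 * Real.pi * σsq t) ^ (-(d : ℝ) / 2) := by
      apply Real.rpow_pos_of_pos
      have := Real.pi_pos
      positivity
    have hS : (0:ℝ) < g t :=
      Finset.sum_pos (fun k _ => Real.exp_pos _) ⟨j, Finset.mem_univ j⟩
    simp only [isoGaussPdf, norm_zero]
    rw [← Finset.mul_sum]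
    rw [show ((0:ℝ) ^ 2) = 0 by ring, neg_zero, zero_div, Real.exp_zero, mul_one]
    rw [div_eq_div_iff (by positivity) (by linarith)]
    show _ = 1 * ((2 * Real.pi * σsq t) ^ (-(d : ℝ) / 2) * g t)
    ring
  -- σsq tends to 0 from within Ioi 0
  have hσ0 : Tendsto σsq (nhdsWithin 0 (Set.Ioi 0)) (nhdsWithin 0 (Set.Ioi 0)) := by
    apply tendsto_nhdsWithin_of_tendsto_nhds_of_eventually_within
    · have h : Tendsto (fun t : ℝ => Linv * (1 - Real.exp (-2 * ξ * t))) (nhds 0)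
          (nhds (Linv * (1 - Real.exp (-2 * ξ * 0)))) := by
        exact (Continuous.tendsto (continuous_const.mul (continuous_const.sub
          (Real.continuous_exp.comp ((continuous_const.mul continuous_id))))) 0)
      simpa [hσ, neg_mul] using h.mono_left
        (nhdsWithin_le_nhds : nhdsWithin (0:ℝ) (Set.Ioi 0) ≤ nhds 0)
    · exact eventually_nhdsWithin_of_forall hσpos
  have hgl : Tendsto g (nhdsWithin 0 (Set.Ioi 0)) (nhds 1) := by
    have h : Tendsto g (nhdsWithin 0 (Set.Ioi 0))
        (nhds (∑ k, if k = j then (1:ℝ) else 0)) := by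
      apply tendsto_finset_sum
      intro k _
      by_cases hk : k = j
      · subst hk
        simp only [sub_self, smul_zero, norm_zero, if_pos rfl]
        have : (fun t : ℝ => Real.exp (-(0:ℝ) ^ 2 / (2 * σsq t))) = fun _ => 1 := by
          funext t; norm_num
        rw [this]; exact tendsto_const_nhds
      · rw [if_neg hk]
        -- the exponent tends to -∞
        have hv : (0:ℝ) < ‖x j - x k‖ ^ 2 := by
          have h0 : x j - x k ≠ 0 := sub_ne_zero.mpr (fun h => hsep k hk h.symm)
          exact pow_pos (norm_pos_iff.mpr h0) 2
        have hnum : Tendsto (fun t : ℝ => ‖Real.exp (-ξ * t) • (x j - x k)‖ ^ 2)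
            (nhdsWithin 0 (Set.Ioi 0)) (nhds (‖x j - x k‖ ^ 2)) := by
          have h : Tendsto (fun t : ℝ => ‖Real.exp (-ξ * t) • (x j - x k)‖ ^ 2) (nhds 0)
              (nhds (‖Real.exp (-ξ * 0) • (x j - x k)‖ ^ 2)) :=
            Continuous.tendsto ((((Real.continuous_exp.comp
              (continuous_const.mul continuous_id)).smul continuous_const).norm.pow 2)) 0
          simpa using h.mono_left nhdsWithin_le_nhds
        have hinv : Tendsto (fun t : ℝ => (2 * σsq t)⁻¹) (nhdsWithin 0 (Set.Ioi 0)) atTop := by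
          apply Tendsto.inv_tendsto_nhdsGT_zero
          apply tendsto_nhdsWithin_of_tendsto_nhds_of_eventually_within
          · have := (hσ0.mono_right nhdsWithin_le_nhds).const_mul (2:ℝ)
            simpa [hσ, neg_mul] using this
          · filter_upwards [eventually_nhdsWithin_of_forall hσpos] with t ht
            exact Set.mem_Ioi.mpr (by linarith)
        have hbot : Tendsto (fun t : ℝ => -(‖Real.exp (-ξ * t) • (x j - x k)‖ ^ 2 * (2 * σsq t)⁻¹))
            (nhdsWithin 0 (Set.Ioi 0)) atBot := by
          apply tendsto_neg_atBot_iff.mpr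
          exact Tendsto.pos_mul_atTop hv hnum hinv
        have := Real.tendsto_exp_atBot.comp hbot
        refine Tendsto.congr (fun t => ?_) this
        simp only [Function.comp_apply, div_eq_mul_inv, neg_mul]
    simpa [Finset.sum_ite_eq'] using h
  have hfin : Tendsto (fun t => 1 / g t) (nhdsWithin 0 (Set.Ioi 0)) (nhds ((1:ℝ)/1)) :=
    tendsto_const_nhds.div hgl one_ne_zero
  norm_num at hfin
  refine hfin.congr' ?_
  filter_upwards [self_mem_nhdsWithin] with t ht
  simpa [one_div, hσ] using (heq t ht).symm
end

section
/- Let F be the 3×3 critically damped HOLD matrix with single eigenvalue -√3 (i.e., (F + √3·I)³ = 0) and exp(Ft) = e^{-√3 t}(I + (F+√3I)t + (F+√3I)²t²/2). Then det(I - exp(Ft)) = (1 - e^{-√3 t})³, and as t → 0⁺, det(I - exp(Ft))² = 27t⁶ + O(t⁷). -/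
/-!
With `N = F + √3 I` nilpotent, `exp (tF) = e^{-√3 t} exp (tN)` and `exp (tN) - 1` is again
nilpotent, so `exp (tF)` has the single eigenvalue `e^{-√3 t}` and
`det (I - exp (tF)) = (1 - e^{-√3 t})³`. Writing `f = 1 - e^{-√3 t} = √3 t + O(t²)` and
`g = √3 t`, the factorisation `f⁶ - g⁶ = (f - g) ∑ fⁱ g⁵⁻ⁱ` gives `f⁶ - 27 t⁶ = O(t²) O(t⁵)`.
-/

open NormedSpace Filter Asymptotics

theorem Matrix.det_smul_one_sub_of_isNilpotent {n R : Type*} [Fintype n] [DecidableEq n]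
    [CommRing R] [IsReduced R] {M : Matrix n n R} (hM : IsNilpotent M) (c : R) :
    (c • (1 : Matrix n n R) - M).det = c ^ Fintype.card n := by
  have hchar : M.charpoly = Polynomial.X ^ Fintype.card n := by
    rw [← sub_eq_zero]
    ext i
    exact ((Polynomial.isNilpotent_iff.mp
      (Matrix.isNilpotent_charpoly_sub_pow_of_isNilpotent hM)) i).eq_zero
  rw [smul_one_eq_diagonal, ← Matrix.scalar_apply, ← Matrix.eval_charpoly, hchar]
  simp

theorem Matrix.exp_smul_one_add {n : Type*} [Fintype n] [DecidableEq n] (c : ℝ)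
    (A : Matrix n n ℝ) : exp (c • (1 : Matrix n n ℝ) + A) = Real.exp c • exp A := by
  have hc : exp (c • (1 : Matrix n n ℝ)) = Real.exp c • 1 := by
    rw [smul_one_eq_diagonal, Matrix.exp_diagonal, smul_one_eq_diagonal, Pi.exp_def,
      Real.exp_eq_exp_ℝ]
  rw [Matrix.exp_add_of_commute _ _ ((Commute.one_left A).smul_left c), hc, smul_one_mul]

theorem NormedSpace.exp_eq_isNilpotent_exp {𝔸 : Type*} [Ring 𝔸] [Algebra ℚ 𝔸]
    [TopologicalSpace 𝔸] [IsTopologicalRing 𝔸] {x : 𝔸} (hx : IsNilpotent x) :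
    exp x = IsNilpotent.exp x := by
  obtain ⟨k, hk⟩ := hx
  rw [exp_eq_tsum_rat, IsNilpotent.exp_eq_sum hk]
  refine tsum_eq_sum fun i hi => ?_
  rw [pow_eq_zero_of_le (by simpa using hi) hk, smul_zero]

theorem Matrix.det_one_sub_exp_of_isNilpotent_add_smul_one {n : Type*} [Fintype n]
    [DecidableEq n] {A : Matrix n n ℝ} {a : ℝ} (hA : IsNilpotent (A + a • 1)) :
    (1 - exp A).det = (1 - Real.exp (-a)) ^ Fintype.card n := by
  have hexp : exp A = Real.exp (-a) • exp (A + a • 1) := by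
    rw [← Matrix.exp_smul_one_add]; congr 1; module
  have hnil : IsNilpotent (Real.exp (-a) • (exp (A + a • 1) - 1)) := by
    refine IsNilpotent.smul ?_ _
    rw [NormedSpace.exp_eq_isNilpotent_exp hA]
    exact IsNilpotent.isNilpotent_exp_sub_one hA
  rw [← Matrix.det_smul_one_sub_of_isNilpotent hnil, hexp]
  congr 1
  module

theorem Asymptotics.IsBigO.pow_sub_pow {α 𝕜 : Type*} [NormedField 𝕜] {l : Filter α}
    {f g : α → 𝕜} {v w : α → ℝ}
    (hfg : (fun x => f x - g x) =O[l] w) (hf : f =O[l] v) (hg : g =O[l] v) (n : ℕ) :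
    (fun x => f x ^ (n + 1) - g x ^ (n + 1)) =O[l] fun x => w x * v x ^ n := by
  have hsum : (fun x => ∑ i ∈ Finset.range (n + 1), f x ^ i * g x ^ (n - i)) =O[l]
      fun x => v x ^ n := by
    refine IsBigO.fun_sum fun i hi => ?_
    have hin : i + (n - i) = n := Nat.add_sub_of_le (Finset.mem_range_succ_iff.mp hi)
    simpa [← pow_add, hin] using (hf.pow i).mul (hg.pow (n - i))
  refine (hfg.mul hsum).congr_left fun x => ?_
  rw [mul_comm]
  simpa using geom_sum₂_mul (f x) (g x) (n + 1)

theorem Real.one_sub_exp_neg_mul_pow_sub_isBigO (a : ℝ) (n : ℕ) :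
    (fun t => (1 - Real.exp (-a * t)) ^ (n + 1) - (a * t) ^ (n + 1)) =O[nhds 0]
      fun t => t ^ (n + 2) := by
  have hexp : (fun t => (1 - Real.exp (-a * t)) - a * t) =O[nhds 0] fun t => t ^ 2 := by
    have hlim : Tendsto (fun t : ℝ => -a * t) (nhds 0) (nhds 0) :=
      (continuous_const_mul (-a)).tendsto' 0 0 (mul_zero _)
    have hsq : (fun t : ℝ => (-a * t) ^ 2) =O[nhds 0] fun t => t ^ 2 :=
      ((isBigO_refl _ _).const_mul_left (a ^ 2)).congr_left fun t => by ring
    refine ((Real.exp_sub_sum_range_isBigO_pow 2).comp_tendsto hlim |>.trans hsq).neg_left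
      |>.congr_left fun t => ?_
    simp only [Function.comp_apply, Finset.sum_range_succ, Finset.range_one, Finset.sum_singleton,
      pow_zero, pow_one, Nat.factorial, Nat.cast_one, div_one]
    ring
  have hlin : (fun t => a * t) =O[nhds 0] fun t => t := (isBigO_refl _ _).const_mul_left a
  have hsq : (fun t : ℝ => t ^ 2) =O[nhds 0] fun t => t := by
    simpa using (isLittleO_pow_pow (𝕜 := ℝ) one_lt_two).isBigO
  have hone : (fun t => 1 - Real.exp (-a * t)) =O[nhds 0] fun t => t :=
    ((hexp.trans hsq).add hlin).congr_left fun t => by ring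
  exact (hexp.pow_sub_pow hone hlin n).congr_right fun t => by ring

/-- For a 3×3 critically damped HOLD matrix `F` with single eigenvalue `-√3`, i.e.
`(F + √3 I)³ = 0`, we have `det (I - exp(Ft)) = (1 - e^{-√3 t})³` for all `t`, and
`det (I - exp(Ft))² = 27 t⁶ + O(t⁷)` as `t → 0⁺`. -/
theorem hold3_det_one_sub_exp (F : Matrix (Fin 3) (Fin 3) ℝ)
    (hnil : (F + Real.sqrt 3 • (1 : Matrix (Fin 3) (Fin 3) ℝ)) ^ 3 = 0) :
    (∀ t : ℝ,
        Matrix.det ((1 : Matrix (Fin 3) (Fin 3) ℝ) - exp (t • F)) =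
          (1 - Real.exp (-Real.sqrt 3 * t)) ^ 3) ∧
      (fun t : ℝ =>
          (Matrix.det ((1 : Matrix (Fin 3) (Fin 3) ℝ) - exp (t • F))) ^ 2 - 27 * t ^ 6)
        =O[nhdsWithin 0 (Set.Ioi 0)] fun t : ℝ => t ^ 7 := by
  have hdet (t : ℝ) : Matrix.det ((1 : Matrix (Fin 3) (Fin 3) ℝ) - exp (t • F)) =
      (1 - Real.exp (-Real.sqrt 3 * t)) ^ 3 := by
    have hN : IsNilpotent (t • F + (Real.sqrt 3 * t) • 1) := by
      refine ⟨3, ?_⟩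
      rw [show t • F + (Real.sqrt 3 * t) • 1 = t • (F + Real.sqrt 3 • 1) by module, smul_pow,
        hnil, smul_zero]
    rw [Matrix.det_one_sub_exp_of_isNilpotent_add_smul_one hN, Fintype.card_fin, neg_mul]
  refine ⟨hdet, ?_⟩
  have hsqrt : Real.sqrt 3 ^ 6 = 27 := by
    rw [show 6 = 2 * 3 by rfl, pow_mul, Real.sq_sqrt (by norm_num)]; norm_num
  refine ((Real.one_sub_exp_neg_mul_pow_sub_isBigO (Real.sqrt 3) 5).mono
    nhdsWithin_le_nhds).congr_left fun t => ?_
  rw [hdet, ← pow_mul, mul_pow, hsqrt]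
end
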